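/- For real x > 0 and 0 ≤ σ ≤ 1, Gautschi's inequality holds: x^(-σ) ≤ Γ(x)/Γ(x+σ) ≤ (1 + 1/x) · (x+1)^(-σ). -/

import Mathlib

/-!
Log-convexity of `Γ` on `[s, s + 1]` together with `Γ (s + 1) = s Γ s` gives
`Γ (s + t) ≤ Γ s * s ^ t` for `0 ≤ t ≤ 1`. Taking `s = x`, `t = σ` is the lower bound; taking
`s = x + σ`, `t = 1 - σ` gives `x Γ x ≤ Γ (x + σ) (x + σ) ^ (1 - σ) ≤ Γ (x + σ) (x + 1) ^ (1 - σ)`,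
which is the upper bound.
-/

open Real

theorem Real.Gamma_add_le_Gamma_mul_rpow {s t : ℝ} (hs : 0 < s) (ht₀ : 0 ≤ t) (ht₁ : t ≤ 1) :
    Gamma (s + t) ≤ Gamma s * s ^ t := by
  have hΓ : 0 < Gamma s := Gamma_pos_of_pos hs
  have hconv := convexOn_log_Gamma.2 (Set.mem_Ioi.2 hs) (Set.mem_Ioi.2 (by linarith : 0 < s + 1))
    (sub_nonneg.2 ht₁) ht₀ (by ring)
  have hpoint : (1 - t) * s + t * (s + 1) = s + t := by ring
  simp only [Function.comp_apply, smul_eq_mul] at hconv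
  rw [hpoint, Gamma_add_one hs.ne', log_mul hs.ne' hΓ.ne'] at hconv
  rw [← log_le_log_iff (Gamma_pos_of_pos (by linarith)) (by positivity),
    log_mul hΓ.ne' (by positivity), log_rpow hs]
  linarith

theorem gautschi_inequality (x σ : ℝ) (hx : 0 < x) (hσ0 : 0 ≤ σ) (hσ1 : σ ≤ 1) :
    x ^ (-σ) ≤ Real.Gamma x / Real.Gamma (x + σ) ∧
    Real.Gamma x / Real.Gamma (x + σ) ≤ (1 + 1 / x) * (x + 1) ^ (-σ) := by
  have hxσ : 0 < x + σ := by linarith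
  have hΓxσ : 0 < Gamma (x + σ) := Gamma_pos_of_pos hxσ
  constructor
  · rw [rpow_neg hx.le, inv_eq_one_div, div_le_div_iff₀ (by positivity) hΓxσ, one_mul]
    exact Gamma_add_le_Gamma_mul_rpow hx hσ0 hσ1
  · have hstep : x * Gamma x ≤ Gamma (x + σ) * (x + 1) ^ (1 - σ) := calc
      x * Gamma x = Gamma (x + σ + (1 - σ)) := by
        rw [← Gamma_add_one hx.ne']; congr 1; ring
      _ ≤ Gamma (x + σ) * (x + σ) ^ (1 - σ) :=
        Gamma_add_le_Gamma_mul_rpow hxσ (by linarith) (by linarith)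
      _ ≤ Gamma (x + σ) * (x + 1) ^ (1 - σ) := by gcongr
    have hrhs : (1 + 1 / x) * (x + 1) ^ (-σ) = (x + 1) ^ (1 - σ) / x := by
      rw [sub_eq_add_neg, rpow_add (by linarith), rpow_one]
      field_simp
    rw [hrhs, div_le_div_iff₀ hΓxσ hx]
    linarith
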